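/- arXiv:1604.03244 — 4 statements merged into one kernel-verified Lean document; each statement's English description precedes it below -/
import Mathlib

section
/- Let V be a finite type and w : V → V → ℝ a symmetric, nonnegative weight function with w v v = 0. Let S be a finite subset of V with |S| ≥ 3, and let v ∈ S be a vertex whose weighted degree into S \ {v} is at most the average weighted degree of S, i.e. degw(v, S \ {v}) ≤ 2·W(S)/|S|. Then den(S \ {v}) ≥ den(S). -/
open Finset

/-- Total weight of a finite set `S`: the sum of `w u v` over all unordered
pairs of distinct vertices of `S`.  Since `w` is symmetric with zero diagonal,
this equals half the full double sum. -/
noncomputable def W {V : Type*} [DecidableEq V] (w : V → V → ℝ) (S : Finset V) : ℝ :=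
  (∑ u ∈ S, ∑ v ∈ S, w u v) / 2

/-- Weighted degree of a vertex `x` into a finite set `S`. -/
noncomputable def degw {V : Type*} [DecidableEq V] (w : V → V → ℝ) (x : V) (S : Finset V) : ℝ :=
  ∑ u ∈ S, w x u

/-- Density of a finite set `S`: total weight divided by `C(|S|, 2)`. -/
noncomputable def den {V : Type*} [DecidableEq V] (w : V → V → ℝ) (S : Finset V) : ℝ :=
  W w S / (S.card.choose 2 : ℝ)

theorem density_nondecreasing_of_remove_low_degree_vertex
    {V : Type*} [Fintype V] [DecidableEq V] (w : V → V → ℝ)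
    (hsymm : ∀ u v, w u v = w v u) (hnonneg : ∀ u v, 0 ≤ w u v)
    (hdiag : ∀ v, w v v = 0)
    (S : Finset V) (hS : 3 ≤ S.card) (v : V) (hv : v ∈ S)
    (hdeg : degw w v (S.erase v) ≤ 2 * W w S / (S.card : ℝ)) :
    den w (S.erase v) ≥ den w S := by
  set n := S.card with hn
  have hnR : (3 : ℝ) ≤ (n : ℝ) := by exact_mod_cast hS
  have hcard : (S.erase v).card = n - 1 := by rw [card_erase_of_mem hv]
  have hcastn1 : ((n - 1 : ℕ) : ℝ) = (n : ℝ) - 1 := by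
    have : 1 ≤ n := by omega
    push_cast [Nat.cast_sub this]; ring
  -- key: W (S.erase v) = W S - degw
  have hsplit : W w (S.erase v) = W w S - degw w v (S.erase v) := by
    have h1 : ∀ u, ∑ x ∈ S, w u x = (∑ x ∈ S.erase v, w u x) + w u v := by
      intro u; rw [Finset.sum_erase_add _ _ hv]
    have h2 : (∑ u ∈ S, ∑ x ∈ S, w u x)
        = (∑ u ∈ S.erase v, ∑ x ∈ S, w u x) + ∑ x ∈ S, w v x := by
      rw [Finset.sum_erase_add _ _ hv]
    have h3 : ∑ x ∈ S, w v x = degw w v (S.erase v) := by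
      rw [← Finset.sum_erase_add _ _ hv, hdiag, add_zero]; rfl
    have h4 : (∑ u ∈ S.erase v, ∑ x ∈ S, w u x)
        = (∑ u ∈ S.erase v, ∑ x ∈ S.erase v, w u x) + degw w v (S.erase v) := by
      calc (∑ u ∈ S.erase v, ∑ x ∈ S, w u x)
          = ∑ u ∈ S.erase v, ((∑ x ∈ S.erase v, w u x) + w u v) := by
            exact Finset.sum_congr rfl fun u _ => h1 u
        _ = (∑ u ∈ S.erase v, ∑ x ∈ S.erase v, w u x) + ∑ u ∈ S.erase v, w u v := by
            rw [Finset.sum_add_distrib]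
        _ = (∑ u ∈ S.erase v, ∑ x ∈ S.erase v, w u x) + degw w v (S.erase v) := by
            congr 1; unfold degw; exact Finset.sum_congr rfl fun u _ => (hsymm u v)
    unfold W
    rw [h2, h4, h3]; ring
  have hW0 : 0 ≤ W w S := by
    unfold W
    have : 0 ≤ ∑ u ∈ S, ∑ x ∈ S, w u x :=
      Finset.sum_nonneg fun u _ => Finset.sum_nonneg fun x _ => hnonneg u x
    linarith
  have hdn : degw w v (S.erase v) * (n : ℝ) ≤ 2 * W w S := by
    have hnpos : (0 : ℝ) < n := by linarith
    calc degw w v (S.erase v) * (n : ℝ) ≤ 2 * W w S / (n : ℝ) * (n : ℝ) := by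
          exact mul_le_mul_of_nonneg_right hdeg (le_of_lt hnpos)
      _ = 2 * W w S := by field_simp
  unfold den
  rw [hsplit, hcard]
  rw [Nat.cast_choose_two, Nat.cast_choose_two, hcastn1]
  set d := degw w v (S.erase v) with hd
  have hd0 : 0 ≤ d := Finset.sum_nonneg fun x _ => hnonneg v x
  have hc1 : (0:ℝ) < ((n:ℝ) - 1) * ((n:ℝ) - 1 - 1) / 2 := by nlinarith
  have hc2 : (0:ℝ) < (n:ℝ) * ((n:ℝ) - 1) / 2 := by nlinarith
  rw [ge_iff_le, div_le_div_iff₀ hc2 hc1]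
  nlinarith [hW0, hdn]
end

section
/- (Pseudo anti-monotonicity, Theorem 1.) Let V be a finite type, w : V → V → ℝ a symmetric, nonnegative weight function with w v v = 0, and θ a real density threshold. If S ⊆ V is finite with |S| ≥ 3 and den(S) ≥ θ, then there exists a vertex v ∈ S such that den(S \ {v}) ≥ θ; in particular S has a proper subset of size |S| − 1 whose density is at least θ. -/
open Finset

lemma erase_double_sum {V : Type*} [DecidableEq V] (w : V → V → ℝ)
    (hsymm : ∀ u v, w u v = w v u) (hdiag : ∀ v, w v v = 0)
    (S : Finset V) {v : V} (hv : v ∈ S) :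
    (∑ u ∈ S.erase v, ∑ x ∈ S.erase v, w u x)
      = (∑ u ∈ S, ∑ x ∈ S, w u x) - 2 * ∑ u ∈ S, w u v := by
  have h1 : ∀ u, (∑ x ∈ S.erase v, w u x) = (∑ x ∈ S, w u x) - w u v := by
    intro u
    rw [← Finset.sum_erase_add S _ hv]; ring
  have h2 : (∑ u ∈ S, ∑ x ∈ S.erase v, w u x)
      = (∑ u ∈ S, ∑ x ∈ S, w u x) - ∑ u ∈ S, w u v := by
    rw [← Finset.sum_sub_distrib]
    exact Finset.sum_congr rfl fun u _ => h1 u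
  rw [← Finset.sum_erase_add S _ hv] at h2
  have h3 : (∑ x ∈ S.erase v, w v x) = (∑ u ∈ S, w u v) - w v v := by
    rw [h1 v]
    congr 1
    exact Finset.sum_congr rfl fun u _ => hsymm v u
  rw [h3, hdiag] at h2
  linarith [h2]

/-- Pseudo anti-monotonicity (Theorem 1): a dense set of size at least 3 has a
vertex whose removal leaves a dense set; in particular it has a proper subset
of size `|S| - 1` whose density is at least `θ`. -/
theorem pseudo_anti_monotonicity
    {V : Type*} [Fintype V] [DecidableEq V] (w : V → V → ℝ)
    (hsymm : ∀ u v, w u v = w v u) (hnonneg : ∀ u v, 0 ≤ w u v)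
    (hdiag : ∀ v, w v v = 0) (θ : ℝ)
    (S : Finset V) (hS : 3 ≤ S.card) (hden : θ ≤ den w S) :
    (∃ v ∈ S, θ ≤ den w (S.erase v)) ∧
      ∃ S' ⊂ S, S'.card = S.card - 1 ∧ θ ≤ den w S' := by
  set n := S.card with hn
  set T : ℝ := ∑ u ∈ S, ∑ x ∈ S, w u x with hT
  -- sum over v of row sums equals T
  have hrow : (∑ v ∈ S, ∑ u ∈ S, w u v) = T := by
    rw [hT, Finset.sum_comm]
  -- sum of erased double sums
  have hsumE : (∑ v ∈ S, ∑ u ∈ S.erase v, ∑ x ∈ S.erase v, w u x)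
      = ((n : ℝ) - 2) * T := by
    have : (∑ v ∈ S, ∑ u ∈ S.erase v, ∑ x ∈ S.erase v, w u x)
        = ∑ v ∈ S, (T - 2 * ∑ u ∈ S, w u v) :=
      Finset.sum_congr rfl fun v hv => erase_double_sum w hsymm hdiag S hv
    rw [this, Finset.sum_sub_distrib, Finset.sum_const, ← Finset.mul_sum, hrow,
      nsmul_eq_mul]
    ring
  -- choose facts
  have hn1 : (1 : ℕ) ≤ n := by omega
  have hcast1 : ((n - 1 : ℕ) : ℝ) = (n : ℝ) - 1 := by
    push_cast [Nat.cast_sub hn1]; ring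
  have hc2 : ((n.choose 2 : ℕ) : ℝ) = (n : ℝ) * ((n : ℝ) - 1) / 2 := by
    rw [Nat.cast_choose_two]
  have hc2' : (((n - 1).choose 2 : ℕ) : ℝ) = ((n : ℝ) - 1) * ((n : ℝ) - 2) / 2 := by
    rw [Nat.cast_choose_two, hcast1]; ring_nf
  have hnR : (3 : ℝ) ≤ (n : ℝ) := by exact_mod_cast hS
  have hc2pos : (0 : ℝ) < ((n.choose 2 : ℕ) : ℝ) := by rw [hc2]; nlinarith
  have hc2'pos : (0 : ℝ) < (((n - 1).choose 2 : ℕ) : ℝ) := by rw [hc2']; nlinarith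
  -- T nonneg
  have hTnn : 0 ≤ T :=
    Finset.sum_nonneg fun u _ => Finset.sum_nonneg fun x _ => hnonneg u x
  -- sum of densities of erased sets
  have hdenE : ∀ v ∈ S, den w (S.erase v)
      = ((∑ u ∈ S.erase v, ∑ x ∈ S.erase v, w u x) / 2) / (((n - 1).choose 2 : ℕ) : ℝ) := by
    intro v hv
    simp [den, W, Finset.card_erase_of_mem hv, hn]
  have hsumden : (∑ v ∈ S, den w (S.erase v))
      = ((n : ℝ) - 2) * T / 2 / (((n - 1).choose 2 : ℕ) : ℝ) := by
    rw [Finset.sum_congr rfl hdenE, ← Finset.sum_div, ← Finset.sum_div, hsumE]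
  -- key inequality: n * θ ≤ sum of densities
  have hdenS : θ ≤ (T / 2) / ((n.choose 2 : ℕ) : ℝ) := hden
  have hkey : (n : ℝ) * θ ≤ ∑ v ∈ S, den w (S.erase v) := by
    rw [hsumden]
    rw [le_div_iff₀ hc2pos] at hdenS
    rw [le_div_iff₀ hc2'pos]
    rw [hc2, hc2'] at *
    nlinarith
  have hne : S.Nonempty := Finset.card_pos.mp (by omega)
  obtain ⟨v, hv, hle⟩ := Finset.exists_le_of_sum_le hne
    (by simpa [Finset.sum_const, nsmul_eq_mul] using hkey :
      ∑ _v ∈ S, θ ≤ ∑ v ∈ S, den w (S.erase v))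
  refine ⟨⟨v, hv, hle⟩, S.erase v, Finset.erase_ssubset hv,
    Finset.card_erase_of_mem hv, hle⟩
end

section
/- (Greedy gap lemma for coverage.) Let D be a finite family of finite subsets of V, let k ≥ 1 be a natural number, and let D* be a finite nonempty family of finite subsets of V with |D*| ≤ k. Then there exists S ∈ D* whose marginal gain satisfies Δcov(S | D) ≥ (cov(D*) − cov(D)) / k; i.e. some member of the optimal family reduces the gap to cov(D*) by at least a 1/k fraction. -/
/-!
Let `U` be the union of `D`. Every point covered by `D*` but not by `D` lies in `S \ U` for some
`S ∈ D*`, so the gap `cov D* - cov D` is at most the sum of the marginal gains `|S \ U|` over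
`S ∈ D*`, hence at most `|D*| ≤ k` times the largest of them.
-/

open Finset

/-- Coverage of a finite family `D` of finite subsets of `V`: the number of
vertices covered by the members of `D`, i.e. the cardinality of their union. -/
def cov {V : Type*} [DecidableEq V] (D : Finset (Finset V)) : ℕ :=
  (D.sup id).card

theorem Finset.exists_sum_le_card_nsmul {ι M : Type*} [AddCommMonoid M] [LinearOrder M]
    [IsOrderedAddMonoid M] {s : Finset ι} (hs : s.Nonempty) (f : ι → M) :
    ∃ i ∈ s, ∑ j ∈ s, f j ≤ #s • f i := by
  obtain ⟨i, hi, hmax⟩ := s.exists_max_image f hs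
  exact ⟨i, hi, s.sum_le_card_nsmul f (f i) hmax⟩

section Coverage

variable {V : Type*} [DecidableEq V]

theorem cov_insert (S : Finset V) (D : Finset (Finset V)) :
    cov (insert S D) = #(S \ D.sup id) + cov D := by
  rw [cov, cov, sup_insert, card_sdiff_add_card]
  rfl

theorem cov_le_cov_add_sum_card_sdiff (D Dstar : Finset (Finset V)) :
    cov Dstar ≤ cov D + ∑ S ∈ Dstar, #(S \ D.sup id) := by
  have hgap : Dstar.sup id \ D.sup id ⊆ Dstar.biUnion (· \ D.sup id) := by
    intro x hx
    obtain ⟨hxT, hxU⟩ := mem_sdiff.1 hx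
    obtain ⟨S, hS, hxS⟩ := mem_sup.1 hxT
    exact mem_biUnion.2 ⟨S, hS, mem_sdiff.2 ⟨hxS, hxU⟩⟩
  calc cov Dstar ≤ #(Dstar.sup id \ D.sup id) + cov D := card_le_card_sdiff_add_card
    _ ≤ #(Dstar.biUnion (· \ D.sup id)) + cov D := by gcongr
    _ ≤ cov D + ∑ S ∈ Dstar, #(S \ D.sup id) := by rw [add_comm]; gcongr; exact card_biUnion_le

end Coverage

theorem greedy_gap_lemma_general {V : Type*} [DecidableEq V]
    (D : Finset (Finset V)) (k : ℕ)
    (Dstar : Finset (Finset V)) (hne : Dstar.Nonempty) (hcard : Dstar.card ≤ k) :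
    ∃ S ∈ Dstar,
      ((cov Dstar : ℝ) - (cov D : ℝ)) / (k : ℝ) ≤
        (cov (insert S D) : ℝ) - (cov D : ℝ) := by
  obtain ⟨S, hS, hsum⟩ := exists_sum_le_card_nsmul hne (fun S => #(S \ D.sup id))
  refine ⟨S, hS, ?_⟩
  have hgap : cov Dstar ≤ cov D + k * #(S \ D.sup id) :=
    calc cov Dstar ≤ cov D + ∑ T ∈ Dstar, #(T \ D.sup id) := cov_le_cov_add_sum_card_sdiff D Dstar
      _ ≤ cov D + #Dstar * #(S \ D.sup id) := by gcongr; exact hsum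
      _ ≤ cov D + k * #(S \ D.sup id) := by gcongr
  rw [cov_insert, Nat.cast_add, add_sub_cancel_right]
  apply div_le_of_le_mul₀ (Nat.cast_nonneg k) (Nat.cast_nonneg _)
  rw [sub_le_iff_le_add', mul_comm]
  exact_mod_cast hgap

/-- Greedy gap lemma for coverage: some member `S` of a nonempty family `D*`
with `|D*| ≤ k` has marginal gain `Δcov(S | D) ≥ (cov(D*) − cov(D)) / k`. -/
theorem greedy_gap_lemma {V : Type*} [DecidableEq V]
    (D : Finset (Finset V)) (k : ℕ) (hk : 1 ≤ k)
    (Dstar : Finset (Finset V)) (hne : Dstar.Nonempty) (hcard : Dstar.card ≤ k) :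
    ∃ S ∈ Dstar,
      ((cov Dstar : ℝ) - (cov D : ℝ)) / (k : ℝ) ≤
        (cov (insert S D) : ℝ) - (cov D : ℝ) :=
  greedy_gap_lemma_general D k Dstar hne hcard
end

section
/- (Theorem 3, case of no edge between the two candidates.) Let V be a finite type and w : V → V → ℝ a symmetric, nonnegative weight function with w v v = 0. Let S ⊆ V be finite and nonempty, and let i, k ∉ S be distinct vertices with w(i,k) = 0. Assume 2·W(S) ≥ (|S| − 1)·degw(i, S) and that either degw(i, S) ≤ 2·degw(k, S) or |S|·degw(i, S) ≤ (|S| + 1)·degw(k, S). Then den(S ∪ {k} ∪ {i}) ≤ den(S ∪ {k}). -/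
open Finset

lemma W_insert {V : Type*} [DecidableEq V] (w : V → V → ℝ)
    (hsymm : ∀ u v, w u v = w v u) (hdiag : ∀ v, w v v = 0)
    (S : Finset V) (x : V) (hx : x ∉ S) :
    W w (insert x S) = W w S + degw w x S := by
  unfold W degw
  rw [sum_insert hx]
  have h1 : ∑ v ∈ insert x S, w x v = ∑ v ∈ S, w x v := by
    rw [sum_insert hx, hdiag, zero_add]
  have h2 : ∑ u ∈ S, ∑ v ∈ insert x S, w u v
      = (∑ u ∈ S, w x u) + ∑ u ∈ S, ∑ v ∈ S, w u v := by
    rw [← sum_add_distrib]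
    refine sum_congr rfl fun u hu => ?_
    rw [sum_insert hx, hsymm u x]
  rw [h1, h2]; ring

lemma W_nonneg {V : Type*} [DecidableEq V] (w : V → V → ℝ)
    (hnonneg : ∀ u v, 0 ≤ w u v) (S : Finset V) : 0 ≤ W w S := by
  unfold W
  have : (0:ℝ) ≤ ∑ u ∈ S, ∑ v ∈ S, w u v :=
    sum_nonneg fun u _ => sum_nonneg fun v _ => hnonneg u v
  linarith

/-- Theorem 3, case of no edge between the two candidates `i` and `k`. -/
theorem density_decreasing_no_edge
    {V : Type*} [Fintype V] [DecidableEq V] (w : V → V → ℝ)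
    (hsymm : ∀ u v, w u v = w v u) (hnonneg : ∀ u v, 0 ≤ w u v)
    (hdiag : ∀ v, w v v = 0)
    (S : Finset V) (hS : S.Nonempty)
    (i k : V) (hik : i ≠ k) (hiS : i ∉ S) (hkS : k ∉ S)
    (hedge : w i k = 0)
    (havg : ((S.card : ℝ) - 1) * degw w i S ≤ 2 * W w S)
    (hcond : degw w i S ≤ 2 * degw w k S ∨
      (S.card : ℝ) * degw w i S ≤ ((S.card : ℝ) + 1) * degw w k S) :
    den w (insert i (insert k S)) ≤ den w (insert k S) := by
  have hiK : i ∉ insert k S := by simp [hik, hiS]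
  have hn : (1 : ℝ) ≤ (S.card : ℝ) := by exact_mod_cast hS.card_pos
  set n : ℝ := (S.card : ℝ)
  have hdi : (0:ℝ) ≤ degw w i S := sum_nonneg fun u _ => hnonneg i u
  have hdk : (0:ℝ) ≤ degw w k S := sum_nonneg fun u _ => hnonneg k u
  have hW0 : (0:ℝ) ≤ W w S := W_nonneg w hnonneg S
  -- key inequality
  have hkey : n * degw w i S ≤ 2 * W w S + 2 * degw w k S := by
    have hcase : degw w i S ≤ 2 * degw w k S := by
      rcases hcond with h | h
      · exact h
      · nlinarith
    nlinarith
  have hdi' : degw w i (insert k S) = degw w i S := by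
    unfold degw; rw [sum_insert hkS, hedge, zero_add]
  have hW1 : W w (insert k S) = W w S + degw w k S :=
    W_insert w hsymm hdiag S k hkS
  have hW2 : W w (insert i (insert k S)) = W w S + degw w k S + degw w i S := by
    rw [W_insert w hsymm hdiag _ i hiK, hdi', hW1]
  have hc1 : (insert k S).card = S.card + 1 := card_insert_of_notMem hkS
  have hc2 : (insert i (insert k S)).card = S.card + 2 := by
    rw [card_insert_of_notMem hiK, hc1]
  unfold den
  rw [hW1, hW2, hc1, hc2]
  have e1 : (((S.card + 1).choose 2 : ℕ) : ℝ) = (n + 1) * n / 2 := by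
    rw [Nat.cast_choose_two]; push_cast; ring
  have e2 : (((S.card + 2).choose 2 : ℕ) : ℝ) = (n + 2) * (n + 1) / 2 := by
    rw [Nat.cast_choose_two]; push_cast; ring
  rw [e1, e2]
  rw [div_le_div_iff₀ (by nlinarith) (by nlinarith)]
  nlinarith
end
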